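/- arXiv:1001.4075 — 2 statements merged into one kernel-verified Lean document; each statement's English description precedes it below -/
import Mathlib

section
/- On ℝⁿ with a weight M = e^{−v} where v is C², for every compactly supported smooth f with ∫ f M dx = 0: if there are constants c > 0, R > 0, ε ∈ (0,1) with ((1−ε)/2)|∇v(x)|² − Δv(x) ≥ c for |x| > R, then ∫|∇f|² M dx ≥ C ∫ f² (1 + |∇v|²) M dx for some C > 0 independent of f, provided the weighted Poincaré inequality ∫ f² M dx ≤ C₀∫|∇f|² M dx holds for mean-zero f. -/
open MeasureTheory Metric Set Real

/-- The Euclidean Laplacian of `f`. -/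
noncomputable def lap {n : ℕ} (f : EuclideanSpace ℝ (Fin n) → ℝ)
    (x : EuclideanSpace ℝ (Fin n)) : ℝ :=
  ∑ i, fderiv ℝ (fun y => fderiv ℝ f y (EuclideanSpace.single i 1)) x (EuclideanSpace.single i 1)

/-- The weighted Laplacian `L f = −Δf + ∇v·∇f`. -/
noncomputable def Lop {n : ℕ} (v f : EuclideanSpace ℝ (Fin n) → ℝ)
    (x : EuclideanSpace ℝ (Fin n)) : ℝ :=
  -(lap f x) + (inner ℝ (gradient v x) (gradient f x) : ℝ)

/-- The measure `dμ = e^{−v} dx`. -/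
noncomputable def muW {n : ℕ} (v : EuclideanSpace ℝ (Fin n) → ℝ) :
    Measure (EuclideanSpace ℝ (Fin n)) :=
  MeasureTheory.volume.withDensity fun x => ENNReal.ofReal (Real.exp (-v x))

section Aux

open InnerProductSpace

variable {n : ℕ}

lemma inner_grad (g : EuclideanSpace ℝ (Fin n) → ℝ) (x u : EuclideanSpace ℝ (Fin n)) :
    (inner ℝ (gradient g x) u : ℝ) = fderiv ℝ g x u :=
  InnerProductSpace.toDual_symm_apply

lemma grad_comp (g : EuclideanSpace ℝ (Fin n) → ℝ) (x : EuclideanSpace ℝ (Fin n)) (i : Fin n) :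
    gradient g x i = fderiv ℝ g x (EuclideanSpace.single i 1) := by
  rw [← inner_grad, EuclideanSpace.inner_single_right]
  simp

lemma inner_grad_sum (g h : EuclideanSpace ℝ (Fin n) → ℝ) (x : EuclideanSpace ℝ (Fin n)) :
    (inner ℝ (gradient g x) (gradient h x) : ℝ)
      = ∑ i, fderiv ℝ g x (EuclideanSpace.single i 1) *
          fderiv ℝ h x (EuclideanSpace.single i 1) := by
  simp_rw [← grad_comp]
  rw [PiLp.inner_apply]
  refine Finset.sum_congr rfl (fun i _ => ?_)
  simp [mul_comm]

lemma norm_grad_sq (g : EuclideanSpace ℝ (Fin n) → ℝ) (x : EuclideanSpace ℝ (Fin n)) :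
    ‖gradient g x‖ ^ 2 = ∑ i, (fderiv ℝ g x (EuclideanSpace.single i 1)) ^ 2 := by
  rw [← real_inner_self_eq_norm_sq, inner_grad_sum]
  simp [sq]

lemma cont_grad (g : EuclideanSpace ℝ (Fin n) → ℝ) (hg : ContDiff ℝ 1 g) :
    Continuous (gradient g) :=
  (toDual ℝ _).symm.continuous.comp (hg.continuous_fderiv one_ne_zero)

lemma cont_lap (v : EuclideanSpace ℝ (Fin n) → ℝ) (hv : ContDiff ℝ 2 v) :
    Continuous (lap v) := by
  unfold lap
  refine continuous_finset_sum _ (fun i _ => ?_)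
  have hDv : ContDiff ℝ 1 (fun y => fderiv ℝ v y (EuclideanSpace.single i 1)) :=
    (hv.fderiv_right (m := 1) le_rfl).clm_apply contDiff_const
  exact (hDv.continuous_fderiv one_ne_zero).clm_apply continuous_const

/-- Key inequality (A): `∫ f² (½|∇v|² − Δv) e^{−v} ≤ 2 ∫ |∇f|² e^{−v}`. -/
lemma lemA (v f : EuclideanSpace ℝ (Fin n) → ℝ) (hv : ContDiff ℝ 2 v)
    (hf : ContDiff ℝ (⊤ : ℕ∞) f) (hfc : HasCompactSupport f) :
    (∫ x, f x ^ 2 * (1/2 * ‖gradient v x‖ ^ 2 - lap v x) * Real.exp (-v x))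
      ≤ 2 * ∫ x, ‖gradient f x‖ ^ 2 * Real.exp (-v x) := by
  set M : EuclideanSpace ℝ (Fin n) → ℝ := fun x => Real.exp (-v x) with hMdef
  have cv : Continuous v := hv.continuous
  have cM : Continuous M := Real.continuous_exp.comp cv.neg
  have hv1 : ContDiff ℝ 1 v := hv.of_le one_le_two
  have hf1 : ContDiff ℝ 1 f := hf.of_le (by simp)
  have cf : Continuous f := hf.continuous
  have cgf : Continuous (gradient f) := cont_grad f hf1
  have cgv : Continuous (gradient v) := cont_grad v hv1
  have cip : Continuous (fun x => (inner ℝ (gradient f x) (gradient v x) : ℝ)) := cgf.inner cgv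
  have cnv : Continuous (fun x => ‖gradient v x‖ ^ 2) := (cgv.norm).pow 2
  have cngf : Continuous (fun x => ‖gradient f x‖ ^ 2) := (cgf.norm).pow 2
  have hDv : ∀ i : Fin n, ContDiff ℝ 1 (fun y => fderiv ℝ v y (EuclideanSpace.single i 1)) :=
    fun i => (hv.fderiv_right (m := 1) le_rfl).clm_apply contDiff_const
  have cDv : ∀ i : Fin n, Continuous (fun y => fderiv ℝ v y (EuclideanSpace.single i 1)) :=
    fun i => (hDv i).continuous
  have cDDv : ∀ i : Fin n, Continuous (fun y =>
      fderiv ℝ (fun z => fderiv ℝ v z (EuclideanSpace.single i 1)) y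
        (EuclideanSpace.single i 1)) :=
    fun i => ((hDv i).continuous_fderiv one_ne_zero).clm_apply continuous_const
  have clap : Continuous (lap v) := cont_lap v hv
  set φ : EuclideanSpace ℝ (Fin n) → ℝ := fun x => f x ^ 2 * M x with hφdef
  have hφC : ContDiff ℝ 1 φ := (hf1.pow 2).mul (hv1.neg.exp)
  have cφ : Continuous φ := hφC.continuous
  have cφ' : ∀ w : EuclideanSpace ℝ (Fin n), Continuous (fun x => fderiv ℝ φ x w) :=
    fun w => (hφC.continuous_fderiv one_ne_zero).clm_apply continuous_const
  -- integrability helper: continuous functions vanishing where `f` vanishes are integrable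
  have hInt : ∀ g : EuclideanSpace ℝ (Fin n) → ℝ, Continuous g →
      (∀ x, f x = 0 → g x = 0) → Integrable g :=
    fun g cg hg => cg.integrable_of_hasCompactSupport
      (HasCompactSupport.intro hfc (fun x hx => hg x (image_eq_zero_of_notMem_tsupport hx)))
  -- formula for the derivative of φ
  have hfderivφ : ∀ x w, fderiv ℝ φ x w
      = (2 * f x * fderiv ℝ f x w - f x ^ 2 * fderiv ℝ v x w) * M x := by
    intro x w
    have hfx : HasFDerivAt f (fderiv ℝ f x) x := (hf.differentiable (by simp) x).hasFDerivAt
    have hvx : HasFDerivAt v (fderiv ℝ v x) x := (hv.differentiable two_ne_zero x).hasFDerivAt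
    have h1 : HasFDerivAt (fun y => f y * f y) (f x • fderiv ℝ f x + f x • fderiv ℝ f x) x :=
      hfx.mul hfx
    have h2 : HasFDerivAt (fun y => Real.exp (-v y)) (Real.exp (-v x) • (-fderiv ℝ v x)) x :=
      hvx.neg.exp
    have h3 : HasFDerivAt (fun y => f y * f y * Real.exp (-v y)) _ x := h1.mul h2
    have e1 : φ = fun y => f y * f y * Real.exp (-v y) := by
      funext y; simp only [hφdef, hMdef]; ring
    rw [e1, h3.fderiv]
    simp only [ContinuousLinearMap.add_apply, ContinuousLinearMap.smul_apply,
      ContinuousLinearMap.neg_apply, smul_eq_mul]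
    simp only [hMdef]
    ring
  -- integrability of the pieces
  have int1 : ∀ i : Fin n, Integrable (fun x => φ x *
      fderiv ℝ (fun z => fderiv ℝ v z (EuclideanSpace.single i 1)) x
        (EuclideanSpace.single i 1)) :=
    fun i => hInt _ (cφ.mul (cDDv i)) (by intro x h; simp [hφdef, h])
  have int2 : ∀ i : Fin n, Integrable (fun x => fderiv ℝ φ x (EuclideanSpace.single i 1) *
      fderiv ℝ v x (EuclideanSpace.single i 1)) :=
    fun i => hInt _ ((cφ' _).mul (cDv i)) (by intro x h; simp [hfderivφ, h])
  have int3 : ∀ i : Fin n, Integrable (fun x => φ x *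
      fderiv ℝ v x (EuclideanSpace.single i 1)) :=
    fun i => hInt _ (cφ.mul (cDv i)) (by intro x h; simp [hφdef, h])
  -- integration by parts in each direction
  have ibp : ∀ i : Fin n, (∫ x, φ x *
        fderiv ℝ (fun z => fderiv ℝ v z (EuclideanSpace.single i 1)) x
          (EuclideanSpace.single i 1))
      = - ∫ x, fderiv ℝ φ x (EuclideanSpace.single i 1) *
          fderiv ℝ v x (EuclideanSpace.single i 1) :=
    fun i => integral_mul_fderiv_eq_neg_fderiv_mul_of_integrable (int2 i) (int1 i) (int3 i)
      (fun x _ => hφC.differentiable one_ne_zero x) (fun x _ => (hDv i).differentiable one_ne_zero x)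
  -- pointwise sum identity
  have hsum : ∀ x, (∑ i, fderiv ℝ φ x (EuclideanSpace.single i 1) *
        fderiv ℝ v x (EuclideanSpace.single i 1))
      = (2 * f x * (inner ℝ (gradient f x) (gradient v x) : ℝ)
          - f x ^ 2 * ‖gradient v x‖ ^ 2) * M x := by
    intro x
    calc (∑ i, fderiv ℝ φ x (EuclideanSpace.single i 1) *
          fderiv ℝ v x (EuclideanSpace.single i 1))
        = ∑ i, (2 * f x * M x * (fderiv ℝ f x (EuclideanSpace.single i 1) *
            fderiv ℝ v x (EuclideanSpace.single i 1))
          - f x ^ 2 * M x * (fderiv ℝ v x (EuclideanSpace.single i 1)) ^ 2) := by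
          refine Finset.sum_congr rfl (fun i _ => ?_)
          rw [hfderivφ]; ring
      _ = 2 * f x * M x * (∑ i, fderiv ℝ f x (EuclideanSpace.single i 1) *
            fderiv ℝ v x (EuclideanSpace.single i 1))
          - f x ^ 2 * M x * (∑ i, (fderiv ℝ v x (EuclideanSpace.single i 1)) ^ 2) := by
          rw [Finset.sum_sub_distrib, ← Finset.mul_sum, ← Finset.mul_sum]
      _ = (2 * f x * (inner ℝ (gradient f x) (gradient v x) : ℝ)
            - f x ^ 2 * ‖gradient v x‖ ^ 2) * M x := by
          rw [← inner_grad_sum, ← norm_grad_sq]; ring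
  -- total integration by parts identity
  have ibp_total : (∫ x, φ x * lap v x)
      = ∫ x, (f x ^ 2 * ‖gradient v x‖ ^ 2
          - 2 * f x * (inner ℝ (gradient f x) (gradient v x) : ℝ)) * M x := by
    calc (∫ x, φ x * lap v x)
        = ∫ x, ∑ i, φ x * fderiv ℝ (fun z => fderiv ℝ v z (EuclideanSpace.single i 1)) x
            (EuclideanSpace.single i 1) := by
          simp only [lap, Finset.mul_sum]
      _ = ∑ i, ∫ x, φ x * fderiv ℝ (fun z => fderiv ℝ v z (EuclideanSpace.single i 1)) x
            (EuclideanSpace.single i 1) := integral_finset_sum _ (fun i _ => int1 i)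
      _ = ∑ i : Fin n, - ∫ x, fderiv ℝ φ x (EuclideanSpace.single i 1) *
            fderiv ℝ v x (EuclideanSpace.single i 1) :=
          Finset.sum_congr rfl (fun i _ => ibp i)
      _ = - ∑ i : Fin n, ∫ x, fderiv ℝ φ x (EuclideanSpace.single i 1) *
            fderiv ℝ v x (EuclideanSpace.single i 1) := by rw [Finset.sum_neg_distrib]
      _ = - ∫ x, ∑ i, fderiv ℝ φ x (EuclideanSpace.single i 1) *
            fderiv ℝ v x (EuclideanSpace.single i 1) := by
          rw [integral_finset_sum _ (fun i _ => int2 i)]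
      _ = - ∫ x, (2 * f x * (inner ℝ (gradient f x) (gradient v x) : ℝ)
            - f x ^ 2 * ‖gradient v x‖ ^ 2) * M x := by simp only [hsum]
      _ = ∫ x, (f x ^ 2 * ‖gradient v x‖ ^ 2
            - 2 * f x * (inner ℝ (gradient f x) (gradient v x) : ℝ)) * M x := by
          rw [← integral_neg]
          exact integral_congr_ae (Filter.Eventually.of_forall fun x => by ring)
  -- rearrange
  have intA : Integrable (fun x => 1/2 * (f x ^ 2 * ‖gradient v x‖ ^ 2) * M x) :=
    hInt _ ((continuous_const.mul ((cf.pow 2).mul cnv)).mul cM) (by intro x h; simp [h])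
  have intB : Integrable (fun x => φ x * lap v x) :=
    hInt _ (cφ.mul clap) (by intro x h; simp [hφdef, h])
  have intC : Integrable (fun x => (f x ^ 2 * ‖gradient v x‖ ^ 2
      - 2 * f x * (inner ℝ (gradient f x) (gradient v x) : ℝ)) * M x) :=
    hInt _ ((((cf.pow 2).mul cnv).sub ((continuous_const.mul cf).mul cip)).mul cM)
      (by intro x h; simp [h])
  have e1 : (∫ x, f x ^ 2 * (1/2 * ‖gradient v x‖ ^ 2 - lap v x) * Real.exp (-v x))
      = ∫ x, (2 * f x * (inner ℝ (gradient f x) (gradient v x) : ℝ)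
          - 1/2 * (f x ^ 2 * ‖gradient v x‖ ^ 2)) * M x := by
    calc (∫ x, f x ^ 2 * (1/2 * ‖gradient v x‖ ^ 2 - lap v x) * Real.exp (-v x))
        = ∫ x, (1/2 * (f x ^ 2 * ‖gradient v x‖ ^ 2) * M x - φ x * lap v x) :=
          integral_congr_ae (Filter.Eventually.of_forall fun x => by
            simp only [hφdef, hMdef]; ring)
      _ = (∫ x, 1/2 * (f x ^ 2 * ‖gradient v x‖ ^ 2) * M x) - ∫ x, φ x * lap v x :=
          integral_sub intA intB
      _ = (∫ x, 1/2 * (f x ^ 2 * ‖gradient v x‖ ^ 2) * M x)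
          - ∫ x, (f x ^ 2 * ‖gradient v x‖ ^ 2
              - 2 * f x * (inner ℝ (gradient f x) (gradient v x) : ℝ)) * M x := by
          rw [ibp_total]
      _ = ∫ x, (1/2 * (f x ^ 2 * ‖gradient v x‖ ^ 2) * M x
          - (f x ^ 2 * ‖gradient v x‖ ^ 2
              - 2 * f x * (inner ℝ (gradient f x) (gradient v x) : ℝ)) * M x) :=
          (integral_sub intA intC).symm
      _ = ∫ x, (2 * f x * (inner ℝ (gradient f x) (gradient v x) : ℝ)
          - 1/2 * (f x ^ 2 * ‖gradient v x‖ ^ 2)) * M x :=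
          integral_congr_ae (Filter.Eventually.of_forall fun x => by ring)
  rw [e1]
  -- now the pointwise Cauchy–Schwarz + AM-GM estimate
  have hgc : HasCompactSupport (gradient f) :=
    (hfc.fderiv (𝕜 := ℝ)).comp_left (g := (toDual ℝ _).symm) (map_zero _)
  have hngc : HasCompactSupport (fun x => ‖gradient f x‖ ^ 2) :=
    hgc.comp_left (g := fun y => ‖y‖ ^ 2) (by simp)
  have intD : Integrable (fun x => ‖gradient f x‖ ^ 2 * M x) :=
    (cngf.mul cM).integrable_of_hasCompactSupport hngc.mul_right
  have intB' : Integrable (fun x => (2 * f x * (inner ℝ (gradient f x) (gradient v x) : ℝ)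
      - 1/2 * (f x ^ 2 * ‖gradient v x‖ ^ 2)) * M x) :=
    hInt _ (((((continuous_const.mul cf).mul cip)).sub
      (continuous_const.mul ((cf.pow 2).mul cnv))).mul cM) (by intro x h; simp [h])
  have hmono : (∫ x, (2 * f x * (inner ℝ (gradient f x) (gradient v x) : ℝ)
      - 1/2 * (f x ^ 2 * ‖gradient v x‖ ^ 2)) * M x)
      ≤ ∫ x, 2 * (‖gradient f x‖ ^ 2 * M x) := by
    refine integral_mono intB' (intD.const_mul 2) (fun x => ?_)
    have hM0 : 0 ≤ M x := Real.exp_nonneg _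
    have hcs : |(inner ℝ (gradient f x) (gradient v x) : ℝ)| ≤ ‖gradient f x‖ * ‖gradient v x‖ :=
      abs_real_inner_le_norm _ _
    have h1 : f x * (inner ℝ (gradient f x) (gradient v x) : ℝ)
        ≤ |f x| * (‖gradient f x‖ * ‖gradient v x‖) := by
      calc f x * (inner ℝ (gradient f x) (gradient v x) : ℝ)
          ≤ |f x * (inner ℝ (gradient f x) (gradient v x) : ℝ)| := le_abs_self _
        _ = |f x| * |(inner ℝ (gradient f x) (gradient v x) : ℝ)| := abs_mul _ _
        _ ≤ |f x| * (‖gradient f x‖ * ‖gradient v x‖) :=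
            mul_le_mul_of_nonneg_left hcs (abs_nonneg _)
    have h2 : 2 * f x * (inner ℝ (gradient f x) (gradient v x) : ℝ)
        - 1/2 * (f x ^ 2 * ‖gradient v x‖ ^ 2) ≤ 2 * ‖gradient f x‖ ^ 2 := by
      nlinarith [sq_nonneg (2 * ‖gradient f x‖ - |f x| * ‖gradient v x‖), sq_abs (f x),
        abs_nonneg (f x), norm_nonneg (gradient f x), norm_nonneg (gradient v x)]
    calc (2 * f x * (inner ℝ (gradient f x) (gradient v x) : ℝ)
        - 1/2 * (f x ^ 2 * ‖gradient v x‖ ^ 2)) * M x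
        ≤ (2 * ‖gradient f x‖ ^ 2) * M x := mul_le_mul_of_nonneg_right h2 hM0
      _ = 2 * (‖gradient f x‖ ^ 2 * M x) := by ring
  calc (∫ x, (2 * f x * (inner ℝ (gradient f x) (gradient v x) : ℝ)
      - 1/2 * (f x ^ 2 * ‖gradient v x‖ ^ 2)) * M x)
      ≤ ∫ x, 2 * (‖gradient f x‖ ^ 2 * M x) := hmono
    _ = 2 * ∫ x, ‖gradient f x‖ ^ 2 * M x := integral_const_mul 2 _

end Aux

/-- Improved weighted Poincaré inequality on ℝⁿ: if `((1−ε)/2)|∇v|² − Δv ≥ c` outside a ball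
and the weighted Poincaré inequality holds for mean-zero functions, then
`∫|∇f|² M dx ≥ C ∫ f² (1 + |∇v|²) M dx` for compactly supported smooth mean-zero `f`,
where `M = e^{−v}`. -/
theorem stmt_7 {n : ℕ} (v : EuclideanSpace ℝ (Fin n) → ℝ) (hv : ContDiff ℝ 2 v)
    (hM : Integrable (fun x => Real.exp (-v x)))
    (c R ε : ℝ) (hc : 0 < c) (hR : 0 < R) (hε : ε ∈ Set.Ioo (0:ℝ) 1)
    (hcond : ∀ x, R < ‖x‖ → c ≤ (1 - ε) / 2 * ‖gradient v x‖ ^ 2 - lap v x)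
    (C₀ : ℝ) (hC₀ : 0 < C₀)
    (hP : ∀ f : EuclideanSpace ℝ (Fin n) → ℝ, ContDiff ℝ (⊤ : ℕ∞) f → HasCompactSupport f →
      (∫ x, f x * Real.exp (-v x)) = 0 →
      ∫ x, f x ^ 2 * Real.exp (-v x) ≤ C₀ * ∫ x, ‖gradient f x‖ ^ 2 * Real.exp (-v x)) :
    ∃ C > (0:ℝ), ∀ f : EuclideanSpace ℝ (Fin n) → ℝ, ContDiff ℝ (⊤ : ℕ∞) f → HasCompactSupport f →
      (∫ x, f x * Real.exp (-v x)) = 0 →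
      C * ∫ x, f x ^ 2 * (1 + ‖gradient v x‖ ^ 2) * Real.exp (-v x)
        ≤ ∫ x, ‖gradient f x‖ ^ 2 * Real.exp (-v x) := by
  obtain ⟨hε0, hε1⟩ := hε
  set hfun : EuclideanSpace ℝ (Fin n) → ℝ :=
    fun x => (1 - ε) / 2 * ‖gradient v x‖ ^ 2 - lap v x with hfundef
  have cv : Continuous v := hv.continuous
  have cM : Continuous (fun x => Real.exp (-v x)) := Real.continuous_exp.comp cv.neg
  have cgv : Continuous (gradient v) := cont_grad v (hv.of_le one_le_two)
  have cnv : Continuous (fun x => ‖gradient v x‖ ^ 2) := (cgv.norm).pow 2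
  have ch : Continuous hfun := (continuous_const.mul cnv).sub (cont_lap v hv)
  obtain ⟨K, hK⟩ := (isCompact_closedBall (0 : EuclideanSpace ℝ (Fin n)) R).exists_bound_of_continuousOn ch.continuousOn
  set K' : ℝ := max K 0 with hK'def
  have hK'0 : 0 ≤ K' := le_max_right _ _
  have hlow : ∀ x, -K' ≤ hfun x := by
    intro x
    by_cases hx : ‖x‖ ≤ R
    · have hxball : x ∈ closedBall (0 : EuclideanSpace ℝ (Fin n)) R := by
        simpa [mem_closedBall_zero_iff] using hx
      have := hK x hxball
      have h1 : |hfun x| ≤ K := by simpa [Real.norm_eq_abs] using this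
      have := neg_abs_le (hfun x)
      have : -K ≤ hfun x := by linarith [(abs_le.mp h1).1]
      linarith [le_max_left K 0]
    · push_neg at hx
      have := hcond x hx
      have : c ≤ hfun x := this
      linarith
  set D : ℝ := C₀ + 2 / ε * (2 + K' * C₀) with hDdef
  have hD : 0 < D := by
    have h2ε : 0 < 2 / ε := by positivity
    have h3 : 0 < 2 + K' * C₀ := by nlinarith
    have h4 : 0 < 2 / ε * (2 + K' * C₀) := mul_pos h2ε h3
    rw [hDdef]
    linarith
  refine ⟨1 / D, by positivity, ?_⟩
  intro f hfsm hfcs hmean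
  have cf : Continuous f := hfsm.continuous
  have cgf : Continuous (gradient f) := cont_grad f (hfsm.of_le (by simp))
  have cngf : Continuous (fun x => ‖gradient f x‖ ^ 2) := (cgf.norm).pow 2
  have hInt : ∀ g : EuclideanSpace ℝ (Fin n) → ℝ, Continuous g →
      (∀ x, f x = 0 → g x = 0) → Integrable g :=
    fun g cg hg => cg.integrable_of_hasCompactSupport
      (HasCompactSupport.intro hfcs (fun x hx => hg x (image_eq_zero_of_notMem_tsupport hx)))
  -- the basic integrals
  set G : ℝ := ∫ x, ‖gradient f x‖ ^ 2 * Real.exp (-v x) with hGdef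
  set P : ℝ := ∫ x, f x ^ 2 * Real.exp (-v x) with hPdef
  set Q : ℝ := ∫ x, f x ^ 2 * ‖gradient v x‖ ^ 2 * Real.exp (-v x) with hQdef
  have intP : Integrable (fun x => f x ^ 2 * Real.exp (-v x)) :=
    hInt _ ((cf.pow 2).mul cM) (by intro x h; simp [h])
  have intQ : Integrable (fun x => f x ^ 2 * ‖gradient v x‖ ^ 2 * Real.exp (-v x)) :=
    hInt _ (((cf.pow 2).mul cnv).mul cM) (by intro x h; simp [h])
  have intH : Integrable (fun x => f x ^ 2 * hfun x * Real.exp (-v x)) :=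
    hInt _ (((cf.pow 2).mul ch).mul cM) (by intro x h; simp [h])
  have hG0 : 0 ≤ G := integral_nonneg (fun x => by positivity)
  have hPoin : P ≤ C₀ * G := hP f hfsm hfcs hmean
  have hA := lemA v f hv hfsm hfcs
  -- split the lemA integrand
  have hsplit : (∫ x, f x ^ 2 * (1/2 * ‖gradient v x‖ ^ 2 - lap v x) * Real.exp (-v x))
      = (∫ x, f x ^ 2 * hfun x * Real.exp (-v x)) + ε / 2 * Q := by
    have e : (∫ x, f x ^ 2 * (1/2 * ‖gradient v x‖ ^ 2 - lap v x) * Real.exp (-v x))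
        = ∫ x, (f x ^ 2 * hfun x * Real.exp (-v x)
            + ε / 2 * (f x ^ 2 * ‖gradient v x‖ ^ 2 * Real.exp (-v x))) :=
      integral_congr_ae (Filter.Eventually.of_forall fun x => by
        simp only [hfundef]; ring)
    rw [e, integral_add intH (intQ.const_mul _), integral_const_mul]
  -- lower bound for the hfun-term
  have hhm : -K' * P ≤ ∫ x, f x ^ 2 * hfun x * Real.exp (-v x) := by
    have : (∫ x, -K' * (f x ^ 2 * Real.exp (-v x)))
        ≤ ∫ x, f x ^ 2 * hfun x * Real.exp (-v x) := by
      refine integral_mono (intP.const_mul _) intH (fun x => ?_)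
      have h0 : 0 ≤ f x ^ 2 * Real.exp (-v x) := by positivity
      have := mul_le_mul_of_nonneg_left (hlow x) h0
      nlinarith
    rwa [integral_const_mul] at this
  -- combine: (ε/2) Q ≤ 2G + K' P
  have hQbound : ε / 2 * Q ≤ 2 * G + K' * P := by
    rw [hsplit] at hA
    linarith
  have hQ2 : Q ≤ 2 / ε * (2 + K' * C₀) * G := by
    have h1 : K' * P ≤ K' * (C₀ * G) := mul_le_mul_of_nonneg_left hPoin hK'0
    have h2 : ε / 2 * Q ≤ (2 + K' * C₀) * G := by nlinarith
    have hε2 : 0 < ε / 2 := by positivity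
    calc Q = 2 / ε * (ε / 2 * Q) := by field_simp
      _ ≤ 2 / ε * ((2 + K' * C₀) * G) := by
          apply mul_le_mul_of_nonneg_left h2 (by positivity)
      _ = 2 / ε * (2 + K' * C₀) * G := by ring
  -- total
  have hT : (∫ x, f x ^ 2 * (1 + ‖gradient v x‖ ^ 2) * Real.exp (-v x)) = P + Q := by
    have e : (∫ x, f x ^ 2 * (1 + ‖gradient v x‖ ^ 2) * Real.exp (-v x))
        = ∫ x, (f x ^ 2 * Real.exp (-v x)
            + f x ^ 2 * ‖gradient v x‖ ^ 2 * Real.exp (-v x)) :=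
      integral_congr_ae (Filter.Eventually.of_forall fun x => by ring)
    rw [e, integral_add intP intQ]
  rw [hT]
  have hfinal : P + Q ≤ D * G := by
    have : P + Q ≤ C₀ * G + 2 / ε * (2 + K' * C₀) * G := by linarith
    calc P + Q ≤ C₀ * G + 2 / ε * (2 + K' * C₀) * G := this
      _ = D * G := by rw [hDdef]; ring
  calc 1 / D * (P + Q) ≤ 1 / D * (D * G) := by
        apply mul_le_mul_of_nonneg_left hfinal (by positivity)
    _ = G := by field_simp
end

section
/- From the Caccioppoli-type inequality ∫ η²|u|² dμ ≤ t ∫ |u|²|∇η|² dμ valid for all Lipschitz η ≥ 0 vanishing on E (where u = (I+tL)^{−1}f, f supported in E), one deduces for η = e^{αζ}−1 with ζ Lipschitz, 0 ≤ ζ, ζ = 0 on E, and α = 1/(2√t‖∇ζ‖_∞): ∫ e^{2αζ}|u|² dμ ≤ 4 ∫ |f|² dμ. -/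
open MeasureTheory Metric Set Real

/-!
Test the Caccioppoli inequality with `η = e^{αζ} - 1`. By the chain rule
`|∇η| = α e^{αζ} |∇ζ| ≤ αK e^{αζ}`, so with `t α² K² = 1/4` it gives
`‖(e^{αζ} - 1) u‖² ≤ ‖e^{αζ} u‖² / 4`. The triangle inequality
`‖e^{αζ} u‖ ≤ ‖(e^{αζ} - 1) u‖ + ‖u‖`, squared as `φ² ≤ 2(φ - 1)² + 2` for `φ = e^{αζ}`, then yields
`‖e^{αζ} u‖² ≤ ‖e^{αζ} u‖² / 2 + 2‖u‖²`; absorbing the first term leaves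
`‖e^{αζ} u‖² ≤ 4‖u‖² ≤ 4‖f‖²`.
-/

section Absorption

variable {X : Type*} [MeasurableSpace X] {μ : Measure X} {φ u : X → ℝ}

lemma integrable_sq_of_integrable_sq_mul_sq (hφ : AEStronglyMeasurable φ μ) (hφ1 : ∀ x, 1 ≤ φ x)
    (hg : Integrable (fun x => φ x ^ 2 * u x ^ 2) μ) : Integrable (fun x => u x ^ 2) μ := by
  have hφ0 : ∀ x, φ x ≠ 0 := fun x => (zero_lt_one.trans_le (hφ1 x)).ne'
  have hmeas : AEStronglyMeasurable (fun x => u x ^ 2) μ := by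
    have := (hφ.pow 2).inv₀.mul hg.aestronglyMeasurable
    refine this.congr (Filter.Eventually.of_forall fun x => ?_)
    simp [hφ0 x]
  refine hg.mono' hmeas (Filter.Eventually.of_forall fun x => ?_)
  rw [norm_pow, Real.norm_eq_abs, sq_abs]
  exact le_mul_of_one_le_left (sq_nonneg _) (one_le_pow₀ (hφ1 x))

lemma integral_sq_mul_sq_le_of_integral_sub_one_sq_le {c : ℝ} (hφ : AEStronglyMeasurable φ μ)
    (hφ1 : ∀ x, 1 ≤ φ x) (hg : Integrable (fun x => φ x ^ 2 * u x ^ 2) μ)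
    (h : ∫ x, (φ x - 1) ^ 2 * u x ^ 2 ∂μ ≤ c * ∫ x, φ x ^ 2 * u x ^ 2 ∂μ) :
    (1 - 2 * c) * ∫ x, φ x ^ 2 * u x ^ 2 ∂μ ≤ 2 * ∫ x, u x ^ 2 ∂μ := by
  have hu := integrable_sq_of_integrable_sq_mul_sq hφ hφ1 hg
  have hv : Integrable (fun x => (φ x - 1) ^ 2 * u x ^ 2) μ := by
    refine hg.mono' ((hφ.sub aestronglyMeasurable_const).pow 2 |>.mul hu.aestronglyMeasurable)
      (Filter.Eventually.of_forall fun x => ?_)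
    have h0 : 0 ≤ φ x - 1 := sub_nonneg.2 (hφ1 x)
    rw [Real.norm_of_nonneg (by positivity)]
    gcongr
    linarith
  have hsplit : ∫ x, φ x ^ 2 * u x ^ 2 ∂μ
      ≤ 2 * ∫ x, (φ x - 1) ^ 2 * u x ^ 2 ∂μ + 2 * ∫ x, u x ^ 2 ∂μ := by
    rw [← integral_const_mul, ← integral_const_mul, ← integral_add (hv.const_mul 2) (hu.const_mul 2)]
    refine integral_mono hg ((hv.const_mul 2).add (hu.const_mul 2)) fun x => ?_
    nlinarith [mul_nonneg (sq_nonneg (u x)) (sq_nonneg (φ x - 2))]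
  linarith

end Absorption

lemma norm_gradient_eq_norm_fderiv {F : Type*} [NormedAddCommGroup F] [InnerProductSpace ℝ F]
    [CompleteSpace F] (f : F → ℝ) (x : F) : ‖gradient f x‖ = ‖fderiv ℝ f x‖ := by
  simp [gradient]

lemma norm_gradient_exp_mul_sub_one {F : Type*} [NormedAddCommGroup F] [InnerProductSpace ℝ F]
    [CompleteSpace F] {ζ : F → ℝ} {x : F} (hζ : DifferentiableAt ℝ ζ x) (α : ℝ) :
    ‖gradient (fun y => exp (α * ζ y) - 1) x‖ = |α| * exp (α * ζ x) * ‖gradient ζ x‖ := by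
  have h := ((hζ.hasFDerivAt.const_mul α).exp.sub_const 1).fderiv
  rw [norm_gradient_eq_norm_fderiv, norm_gradient_eq_norm_fderiv, h, norm_smul, norm_smul,
    Real.norm_eq_abs, Real.norm_eq_abs, abs_exp]
  ring

lemma integral_sq_mul_norm_gradient_exp_mul_sub_one_sq_le {F : Type*} [NormedAddCommGroup F]
    [InnerProductSpace ℝ F] [CompleteSpace F] [MeasurableSpace F] {μ : Measure F}
    {ζ u : F → ℝ} {α K : ℝ} (hζ : Differentiable ℝ ζ) (hζK : ∀ x, ‖gradient ζ x‖ ≤ K)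
    (hg : Integrable (fun x => exp (α * ζ x) ^ 2 * u x ^ 2) μ) :
    ∫ x, u x ^ 2 * ‖gradient (fun y => exp (α * ζ y) - 1) x‖ ^ 2 ∂μ
      ≤ (α * K) ^ 2 * ∫ x, exp (α * ζ x) ^ 2 * u x ^ 2 ∂μ := by
  rw [← integral_const_mul]
  refine integral_mono_of_nonneg (Filter.Eventually.of_forall fun x => by positivity)
    (hg.const_mul _) (Filter.Eventually.of_forall fun x => ?_)
  have hK : ‖gradient ζ x‖ ^ 2 ≤ K ^ 2 := pow_le_pow_left₀ (norm_nonneg _) (hζK x) 2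
  calc u x ^ 2 * ‖gradient (fun y => exp (α * ζ y) - 1) x‖ ^ 2
      = α ^ 2 * ‖gradient ζ x‖ ^ 2 * (exp (α * ζ x) ^ 2 * u x ^ 2) := by
        rw [norm_gradient_exp_mul_sub_one (hζ x), mul_pow, mul_pow, sq_abs]
        ring
    _ ≤ α ^ 2 * K ^ 2 * (exp (α * ζ x) ^ 2 * u x ^ 2) := by gcongr
    _ = (α * K) ^ 2 * (exp (α * ζ x) ^ 2 * u x ^ 2) := by ring

theorem stmt_13_general {n : ℕ} (μ : Measure (EuclideanSpace ℝ (Fin n)))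
    (E : Set (EuclideanSpace ℝ (Fin n))) (t K : ℝ) (ht : 0 < t) (hK : 0 < K)
    (u f : EuclideanSpace ℝ (Fin n) → ℝ)
    (hu : ∫ x, u x ^ 2 ∂μ ≤ ∫ x, f x ^ 2 ∂μ)
    (hcacc : ∀ η : EuclideanSpace ℝ (Fin n) → ℝ, Differentiable ℝ η →
      (∀ x, 0 ≤ η x) → (∀ x ∈ E, η x = 0) →
      ∫ x, η x ^ 2 * u x ^ 2 ∂μ ≤ t * ∫ x, u x ^ 2 * ‖gradient η x‖ ^ 2 ∂μ)
    (ζ : EuclideanSpace ℝ (Fin n) → ℝ) (hζ : Differentiable ℝ ζ)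
    (hζ0 : ∀ x, 0 ≤ ζ x) (hζE : ∀ x ∈ E, ζ x = 0)
    (hζK : ∀ x, ‖gradient ζ x‖ ≤ K) :
    ∫ x, Real.exp (2 * (1 / (2 * Real.sqrt t * K)) * ζ x) * u x ^ 2 ∂μ
      ≤ 4 * ∫ x, f x ^ 2 ∂μ := by
  set α := 1 / (2 * √t * K) with hα_def
  have htαK : t * (α * K) ^ 2 = 1 / 4 := by
    rw [hα_def, div_mul_eq_mul_div, one_mul, div_pow, mul_pow, mul_pow, sq_sqrt ht.le]
    field_simp
    norm_num
  have hexp_sq : ∀ x, exp (2 * α * ζ x) = exp (α * ζ x) ^ 2 := fun x => by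
    rw [← exp_nat_mul]; ring_nf
  simp_rw [hexp_sq]
  by_cases hg : Integrable (fun x => exp (α * ζ x) ^ 2 * u x ^ 2) μ
  swap
  · rw [integral_undef hg]
    exact mul_nonneg zero_le_four (integral_nonneg fun x => sq_nonneg _)
  have hφ1 : ∀ x, 1 ≤ exp (α * ζ x) := fun x => one_le_exp (by have := hζ0 x; positivity)
  have hcacc' : ∫ x, (exp (α * ζ x) - 1) ^ 2 * u x ^ 2 ∂μ
      ≤ 1 / 4 * ∫ x, exp (α * ζ x) ^ 2 * u x ^ 2 ∂μ :=
    calc _ ≤ t * ∫ x, u x ^ 2 * ‖gradient (fun y => exp (α * ζ y) - 1) x‖ ^ 2 ∂μ :=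
          hcacc _ ((hζ.const_mul α).exp.sub_const 1) (fun x => sub_nonneg.2 (hφ1 x))
            (fun x hx => by simp [hζE x hx])
      _ ≤ t * ((α * K) ^ 2 * ∫ x, exp (α * ζ x) ^ 2 * u x ^ 2 ∂μ) := by
          gcongr
          exact integral_sq_mul_norm_gradient_exp_mul_sub_one_sq_le hζ hζK hg
      _ = _ := by rw [← mul_assoc, htαK]
  have habsorb := integral_sq_mul_sq_le_of_integral_sub_one_sq_le
    (hζ.const_mul α).exp.continuous.aestronglyMeasurable hφ1 hg hcacc'
  linarith

/-- From the Caccioppoli-type inequality `∫ η²u² dμ ≤ t ∫ u²|∇η|² dμ` (for nonnegative `η`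
vanishing on `E`) and `‖u‖ ≤ ‖f‖`, one deduces, for `ζ ≥ 0` vanishing on `E` with
`‖∇ζ‖_∞ ≤ K` and `α = 1/(2√t K)`, that `∫ e^{2αζ}u² dμ ≤ 4∫ f² dμ`. -/
theorem stmt_13 {n : ℕ} (μ : Measure (EuclideanSpace ℝ (Fin n))) [SigmaFinite μ]
    (E : Set (EuclideanSpace ℝ (Fin n))) (t K : ℝ) (ht : 0 < t) (hK : 0 < K)
    (u f : EuclideanSpace ℝ (Fin n) → ℝ)
    (hu : ∫ x, u x ^ 2 ∂μ ≤ ∫ x, f x ^ 2 ∂μ)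
    (hcacc : ∀ η : EuclideanSpace ℝ (Fin n) → ℝ, Differentiable ℝ η →
      (∀ x, 0 ≤ η x) → (∀ x ∈ E, η x = 0) →
      ∫ x, η x ^ 2 * u x ^ 2 ∂μ ≤ t * ∫ x, u x ^ 2 * ‖gradient η x‖ ^ 2 ∂μ)
    (ζ : EuclideanSpace ℝ (Fin n) → ℝ) (hζ : Differentiable ℝ ζ)
    (hζ0 : ∀ x, 0 ≤ ζ x) (hζE : ∀ x ∈ E, ζ x = 0)
    (hζK : ∀ x, ‖gradient ζ x‖ ≤ K) :
    ∫ x, Real.exp (2 * (1 / (2 * Real.sqrt t * K)) * ζ x) * u x ^ 2 ∂μ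
      ≤ 4 * ∫ x, f x ^ 2 ∂μ :=
  stmt_13_general μ E t K ht hK u f hu hcacc ζ hζ hζ0 hζE hζK
end
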